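/- Let F be a field, k ≥ 2, and work over the field F(λ) of rational functions. Let D(λ) = Σ_{i=0}^{k} D_i φ_i(λ) with D_i ∈ F^{m×m}, let A ∈ F^{n×n}, B ∈ F^{n×m}, C ∈ F^{m×n}, and set G(λ) := D(λ) + C(λI_n − A)^{−1}B ∈ F(λ)^{m×m} (the matrix λI_n − A is invertible over F(λ) since its determinant, the characteristic polynomial of A, is nonzero). Let v ∈ F^k and let L(λ) ∈ F[λ]^{km×km} be a pencil satisfying L(λ)·(Φ_k(λ)⊗I_m) = v ⊗ D(λ). Define Ĝ(λ) := L(λ) + [0_{km×(k−1)m}, (v⊗I_m)·C(λI_n−A)^{−1}B] ∈ F(λ)^{km×km}. Then Ĝ(λ)·(Φ_k(λ)⊗I_m) = (v⊗I_m)·G(λ). -/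

import Mathlib

/-!
Since `φ₀ = 1`, the last block of `Φ_k(λ) ⊗ I_m` is the identity, so the correction term
`[0, (v ⊗ I_m) C (λI_n − A)⁻¹ B]` of `Ĝ` contributes exactly `(v ⊗ I_m) C (λI_n − A)⁻¹ B`
to `Ĝ(λ)(Φ_k(λ) ⊗ I_m)`, while the pencil contributes `v ⊗ D(λ)` by the ansatz equation.
-/

open Matrix

/-- The column vector `Φ_k(λ) ⊗ I_m` as a `km × m` polynomial matrix. -/
noncomputable def phiKron {F : Type*} [Field F] (φ : ℕ → Polynomial F) (k m : ℕ) :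
    Matrix (Fin k × Fin m) (Fin m) (Polynomial F) :=
  Matrix.of fun p j => if p.2 = j then φ (k - 1 - (p.1 : ℕ)) else 0

/-- The matrix `v ⊗ I_m ∈ R^{km×m}` built from a vector `v ∈ R^k`. -/
def vKron {R : Type*} [Semiring R] (k m : ℕ) (v : Fin k → R) :
    Matrix (Fin k × Fin m) (Fin m) R :=
  Matrix.of fun p j => if p.2 = j then v p.1 else 0

/-- The matrix `(λ I_n − A)⁻¹` over the field of rational functions. -/
noncomputable def lamResolvent {F : Type*} [Field F] {n : ℕ} (A : Matrix (Fin n) (Fin n) F) :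
    Matrix (Fin n) (Fin n) (RatFunc F) :=
  (Matrix.diagonal (fun _ => (RatFunc.X : RatFunc F)) - A.map (algebraMap F (RatFunc F)))⁻¹

def lastBlockColumn {R ι : Type*} [Zero R] (k : ℕ) {m : ℕ} (X : Matrix ι (Fin m) R) :
    Matrix ι (Fin k × Fin m) R :=
  Matrix.of fun p q => if (q.1 : ℕ) = k - 1 then X p q.2 else 0

theorem lastBlockColumn_mul {R ι : Type*} [NonUnitalNonAssocSemiring R] {k m : ℕ}
    (hk : 0 < k) (X : Matrix ι (Fin m) R) (Y : Matrix (Fin k × Fin m) (Fin m) R) :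
    lastBlockColumn k X * Y = X * Y.submatrix (fun a => (⟨k - 1, by omega⟩, a)) id := by
  ext p j
  rw [mul_apply, Fintype.sum_prod_type, Finset.sum_eq_single ⟨k - 1, by omega⟩]
  · simp [lastBlockColumn, mul_apply]
  · intro i _ hi
    have : (i : ℕ) ≠ k - 1 := fun h => hi (Fin.ext h)
    simp [lastBlockColumn, this]
  · simp

theorem phiKron_submatrix_last {F : Type*} [Field F] (φ : ℕ → Polynomial F) {k : ℕ} (m : ℕ)
    (hk : 0 < k) :
    (phiKron φ k m).submatrix (fun a => (⟨k - 1, by omega⟩, a)) id = diagonal fun _ => φ 0 := by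
  ext a b
  simp [phiKron, diagonal_apply]

theorem vKron_map {R S : Type*} [Semiring R] [Semiring S] (f : R →+* S) (k m : ℕ)
    (v : Fin k → R) : (vKron k m v).map f = vKron k m (fun i => f (v i)) := by
  ext p j
  simp only [vKron, map_apply, of_apply, apply_ite f, map_zero]

theorem vKron_C_map_algebraMap {F : Type*} [Field F] (k m : ℕ) (v : Fin k → F) :
    (vKron k m fun i => Polynomial.C (v i)).map (algebraMap (Polynomial F) (RatFunc F))
      = vKron k m fun i => algebraMap F (RatFunc F) (v i) := by
  simp only [vKron_map, ← Polynomial.algebraMap_eq, ← IsScalarTower.algebraMap_apply]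

theorem transferFunction_mul_phiKron_M1_general
    {F : Type*} [Field F] {m n k : ℕ}
    (φ : ℕ → Polynomial F) (hφ0 : φ 0 = 1)
    (D : ℕ → Matrix (Fin m) (Fin m) F)
    (A : Matrix (Fin n) (Fin n) F) (B : Matrix (Fin n) (Fin m) F)
    (C : Matrix (Fin m) (Fin n) F)
    (G : Matrix (Fin m) (Fin m) (RatFunc F))
    (hG : G = (∑ i ∈ Finset.range (k + 1),
          (D i).map (fun a => φ i * Polynomial.C a)).map (algebraMap (Polynomial F) (RatFunc F))
        + C.map (algebraMap F (RatFunc F)) * lamResolvent A * B.map (algebraMap F (RatFunc F)))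
    (v : Fin k → F)
    (L : Matrix (Fin k × Fin m) (Fin k × Fin m) (Polynomial F))
    (hansatz : L * phiKron φ k m
      = vKron k m (fun i => Polynomial.C (v i)) *
          (∑ i ∈ Finset.range (k + 1), (D i).map (fun a => φ i * Polynomial.C a)))
    (Ghat : Matrix (Fin k × Fin m) (Fin k × Fin m) (RatFunc F))
    (hGhat : Ghat = L.map (algebraMap (Polynomial F) (RatFunc F))
      + Matrix.of (fun p q =>
          if (q.1 : ℕ) = k - 1 then
            (vKron k m (fun i => algebraMap F (RatFunc F) (v i)) *
              (C.map (algebraMap F (RatFunc F)) * lamResolvent A *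
                B.map (algebraMap F (RatFunc F)))) p q.2
          else 0)) :
    Ghat * (phiKron φ k m).map (algebraMap (Polynomial F) (RatFunc F))
      = vKron k m (fun i => algebraMap F (RatFunc F) (v i)) * G := by
  obtain rfl | hk := k.eq_zero_or_pos
  · exact Subsingleton.elim _ _
  set f := algebraMap (Polynomial F) (RatFunc F)
  set V := vKron k m fun i => algebraMap F (RatFunc F) (v i)
  set M := C.map (algebraMap F (RatFunc F)) * lamResolvent A * B.map (algebraMap F (RatFunc F))
  set Φ := (phiKron φ k m).map f with hΦ
  have hpencil : L.map f * Φ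
      = V * (∑ i ∈ Finset.range (k + 1), (D i).map (fun a => φ i * Polynomial.C a)).map f := by
    rw [hΦ, ← Matrix.map_mul, hansatz, Matrix.map_mul, vKron_C_map_algebraMap]
  have hcorrection : lastBlockColumn k (V * M) * Φ = V * M := by
    rw [lastBlockColumn_mul hk, hΦ, submatrix_map, phiKron_submatrix_last φ m hk, hφ0,
      diagonal_one, Matrix.map_one f (map_zero f) (map_one f), Matrix.mul_one]
  calc Ghat * Φ = L.map f * Φ + lastBlockColumn k (V * M) * Φ := by
        rw [hGhat, Matrix.add_mul]; rfl
    _ = V * G := by rw [hpencil, hcorrection, hG, Matrix.mul_add]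

/-- If `L(λ)` is a pencil with `L(λ)(Φ_k(λ)⊗I_m) = v ⊗ D(λ)` and
`Ĝ(λ) = L(λ) + [0_{km×(k−1)m}, (v⊗I_m)C(λI_n−A)⁻¹B]` is the transfer function of the
associated `𝕄₁`-strong linearization of `G(λ) = D(λ) + C(λI_n−A)⁻¹B`, then
`Ĝ(λ)(Φ_k(λ)⊗I_m) = (v⊗I_m)G(λ)`. -/
theorem transferFunction_mul_phiKron_M1
    {F : Type*} [Field F] {m n k : ℕ} (hk : 2 ≤ k)
    (α β γ : ℕ → F) (hα : ∀ j, α j ≠ 0)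
    (φ : ℕ → Polynomial F) (hφ0 : φ 0 = 1)
    (hrec : ∀ j : ℕ, Polynomial.C (α j) * φ (j + 1)
      = (Polynomial.X - Polynomial.C (β j)) * φ j
        - Polynomial.C (γ j) * (if j = 0 then 0 else φ (j - 1)))
    (D : ℕ → Matrix (Fin m) (Fin m) F)
    (A : Matrix (Fin n) (Fin n) F) (B : Matrix (Fin n) (Fin m) F)
    (C : Matrix (Fin m) (Fin n) F)
    (G : Matrix (Fin m) (Fin m) (RatFunc F))
    (hG : G = (∑ i ∈ Finset.range (k + 1),
          (D i).map (fun a => φ i * Polynomial.C a)).map (algebraMap (Polynomial F) (RatFunc F))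
        + C.map (algebraMap F (RatFunc F)) * lamResolvent A * B.map (algebraMap F (RatFunc F)))
    (v : Fin k → F)
    (L : Matrix (Fin k × Fin m) (Fin k × Fin m) (Polynomial F))
    (hLpencil : ∀ p q, (L p q).natDegree ≤ 1)
    (hansatz : L * phiKron φ k m
      = vKron k m (fun i => Polynomial.C (v i)) *
          (∑ i ∈ Finset.range (k + 1), (D i).map (fun a => φ i * Polynomial.C a)))
    (Ghat : Matrix (Fin k × Fin m) (Fin k × Fin m) (RatFunc F))
    (hGhat : Ghat = L.map (algebraMap (Polynomial F) (RatFunc F))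
      + Matrix.of (fun p q =>
          if (q.1 : ℕ) = k - 1 then
            (vKron k m (fun i => algebraMap F (RatFunc F) (v i)) *
              (C.map (algebraMap F (RatFunc F)) * lamResolvent A *
                B.map (algebraMap F (RatFunc F)))) p q.2
          else 0)) :
    Ghat * (phiKron φ k m).map (algebraMap (Polynomial F) (RatFunc F))
      = vKron k m (fun i => algebraMap F (RatFunc F) (v i)) * G :=
  transferFunction_mul_phiKron_M1_general φ hφ0 D A B C G hG v L hansatz Ghat hGhat
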